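/- arXiv:0804.0112 — 10 statements merged into one kernel-verified Lean document; each statement's English description precedes it below -/
import Mathlib

section
/- For every odd negative integer n, q_n(w) = p_n(v) · p_{6-n}(v) / v^{2-n}, where w = 2 - (v+1)(v+2)/v; equivalently, v^{2-n} · q_n(2 - (v+1)(v+2)/v) = p_n(v) · p_{6-n}(v) as an identity in ℚ(v). -/
/-!
Put `w = 2 - (v+1)(v+2)/v`, so that `v w = -(v² + v + 2)`. Then `p_n` and `p_{6-n}` (for `n < 0`)
satisfy the same two-term recurrence `u_{k+2} = -v² u_k + v w u_{k+1}`, whose characteristic roots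
`r, s` have `r + s = v w` and `r s = v²`. Their product is therefore governed by the roots
`r², r s, s²`, i.e. by the three-term recurrence with characteristic polynomial
`T³ - v²(w²-1) T² + v⁴(w²-1) T - v⁶`, and this is exactly the recurrence of `q_n` after rescaling
by `v^{2-n}`. Both sides of the identity thus satisfy one recurrence, and they agree at the
first three indices.
-/

open Polynomial

/-- `pAux k` is the polynomial `p_{-(2k+1)}` of the paper. -/
noncomputable def pAux : ℕ → Polynomial ℤ
  | 0 => X ^ 3 + 2 * X ^ 2 + X + 1
  | 1 => -(X ^ 5 + 3 * X ^ 4 + 4 * X ^ 3 + 5 * X ^ 2 + 4 * X + 2)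
  | (k + 2) => -((X ^ 2 + X + 2) * pAux (k + 1) + X ^ 2 * pAux k)

/-- `pPosAux k` is the polynomial `p_{7+2k}` of the paper. -/
noncomputable def pPosAux : ℕ → Polynomial ℤ
  | 0 => -(X ^ 3 + 2 * X ^ 2 + 8 * X + 8)
  | 1 => X ^ 5 + 4 * X ^ 4 + 10 * X ^ 3 + 16 * X ^ 2 + 24 * X + 16
  | (k + 2) => -((X ^ 2 + X + 2) * pPosAux (k + 1) + X ^ 2 * pPosAux k)

/-- `pp n` is the polynomial `p_n` of the paper, for `n` odd with `n < 0` or `n ≥ 7`. -/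
noncomputable def pp (n : ℤ) : Polynomial ℤ :=
  if n < 0 then pAux ((-1 - n) / 2).toNat else pPosAux ((n - 7) / 2).toNat

/-- `qAux k` is the polynomial `q_{-(2k+1)}` of the paper. -/
noncomputable def qAux : ℕ → Polynomial ℤ
  | 0 => X ^ 3 - X ^ 2 + 2 * X - 7
  | 1 => X ^ 5 - 2 * X ^ 4 - 2 * X ^ 3 + 5 * X ^ 2 + 3 * X - 9
  | 2 => X ^ 7 - 2 * X ^ 6 - 4 * X ^ 5 + 8 * X ^ 4 + 4 * X ^ 3 - 7 * X ^ 2 + 2 * X - 7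
  | (k + 3) => (X ^ 2 - 1) * (qAux (k + 2) - qAux (k + 1)) + qAux k

/-- `qq n` is the polynomial `q_n` of the paper, for `n` odd and negative. -/
noncomputable def qq (n : ℤ) : Polynomial ℤ := qAux ((-1 - n) / 2).toNat


section

variable {R : Type*} [CommRing R]

theorem eq_of_three_term_recurrence {c₀ c₁ c₂ : R} {u v : ℕ → R}
    (hu : ∀ k, u (k + 3) = c₀ * u k + c₁ * u (k + 1) + c₂ * u (k + 2))
    (hv : ∀ k, v (k + 3) = c₀ * v k + c₁ * v (k + 1) + c₂ * v (k + 2))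
    (hinit : ∀ k < 3, u k = v k) : u = v := by
  let E : LinearRecurrence R := ⟨3, ![c₀, c₁, c₂]⟩
  have isSolution (s : ℕ → R)
      (hs : ∀ k, s (k + 3) = c₀ * s k + c₁ * s (k + 1) + c₂ * s (k + 2)) : E.IsSolution s := by
    simpa [E, LinearRecurrence.IsSolution, Fin.sum_univ_three] using hs
  exact (E.eq_iff_eqOn_range_order u v (isSolution u hu) (isSolution v hv)).2
    fun k hk ↦ hinit k (Finset.mem_range.1 hk)

theorem mul_add_three_of_two_term_recurrence {c₀ c₁ : R} {u v : ℕ → R}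
    (hu : ∀ k, u (k + 2) = c₀ * u k + c₁ * u (k + 1))
    (hv : ∀ k, v (k + 2) = c₀ * v k + c₁ * v (k + 1)) (k : ℕ) :
    u (k + 3) * v (k + 3) = -c₀ ^ 3 * (u k * v k) + c₀ * (c₁ ^ 2 + c₀) * (u (k + 1) * v (k + 1))
      + (c₁ ^ 2 + c₀) * (u (k + 2) * v (k + 2)) := by
  rw [hu (k + 1), hv (k + 1), hu k, hv k]
  ring

variable {x w : R}

theorem aeval_add_two_of_recurrence (hw : x * w = -(x ^ 2 + x + 2)) {f : ℕ → ℤ[X]}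
    (hf : ∀ k, f (k + 2) = -((X ^ 2 + X + 2) * f (k + 1) + X ^ 2 * f k)) (k : ℕ) :
    aeval x (f (k + 2)) = -x ^ 2 * aeval x (f k) + x * w * aeval x (f (k + 1)) := by
  simp only [hf, map_neg, map_add, map_mul, map_pow, map_ofNat, aeval_X]
  linear_combination -aeval x (f (k + 1)) * hw

theorem pow_mul_aeval_qAux_eq_of_lt_three (hw : x * w = -(x ^ 2 + x + 2))
    (hinit : ∀ k < 3, x ^ (2 * k + 3) * aeval w (qAux k) = aeval x (pAux k) * aeval x (pPosAux k))
    (k : ℕ) : x ^ (2 * k + 3) * aeval w (qAux k) = aeval x (pAux k) * aeval x (pPosAux k) := by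
  have hp := aeval_add_two_of_recurrence hw (f := pAux) fun _ ↦ rfl
  have hp' := aeval_add_two_of_recurrence hw (f := pPosAux) fun _ ↦ rfl
  refine congrFun (eq_of_three_term_recurrence (u := fun k ↦ x ^ (2 * k + 3) * aeval w (qAux k))
    (v := fun k ↦ aeval x (pAux k) * aeval x (pPosAux k))
    (c₀ := x ^ 6) (c₁ := -x ^ 4 * (w ^ 2 - 1)) (c₂ := x ^ 2 * (w ^ 2 - 1))
    (fun k ↦ ?_) (fun k ↦ ?_) hinit) k
  · simp only [qAux, map_add, map_sub, map_mul, map_pow, map_one, aeval_X]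
    ring
  · have h := mul_add_three_of_two_term_recurrence (u := fun k ↦ aeval x (pAux k))
      (v := fun k ↦ aeval x (pPosAux k)) hp hp' k
    beta_reduce at h ⊢
    linear_combination h

end

theorem pow_mul_aeval_qAux_eq {K : Type*} [Field K] {x : K} (hx : x ≠ 0) (k : ℕ) :
    x ^ (2 * k + 3) * aeval (2 - (x + 1) * (x + 2) / x) (qAux k) =
      aeval x (pAux k) * aeval x (pPosAux k) := by
  refine pow_mul_aeval_qAux_eq_of_lt_three (by field_simp; ring) (fun k hk ↦ ?_) k
  interval_cases k <;>
  · simp only [qAux, pAux, pPosAux, map_add, map_sub, map_mul, map_pow, map_neg,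
      map_ofNat, map_one, aeval_X]
    field_simp
    ring

/-- For every odd negative integer `n`,
`v^(2-n) * q_n(2 - (v+1)(v+2)/v) = p_n(v) * p_{6-n}(v)` in `ℚ(v)`. -/
theorem pretzel_q_p_relation (n : ℤ) (hodd : Odd n) (hneg : n < 0) :
    (RatFunc.X : RatFunc ℚ) ^ (2 - n).toNat *
        Polynomial.aeval
          ((2 : RatFunc ℚ) - (RatFunc.X + 1) * (RatFunc.X + 2) / RatFunc.X) (qq n) =
      Polynomial.aeval (RatFunc.X : RatFunc ℚ) (pp n) *
        Polynomial.aeval (RatFunc.X : RatFunc ℚ) (pp (6 - n)) := by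
  obtain ⟨m, rfl⟩ := hodd
  have hk : ((-1 - (2 * m + 1)) / 2).toNat = (-1 - m).toNat := by omega
  have hk' : ((6 - (2 * m + 1) - 7) / 2).toNat = (-1 - m).toNat := by omega
  have hdeg : (2 - (2 * m + 1)).toNat = 2 * (-1 - m).toNat + 3 := by omega
  rw [qq, pp, pp, if_pos hneg, if_neg (by omega), hk, hk', hdeg]
  -- `RatFunc ℚ` carries its own `ℤ`-algebra instance, equal to the canonical one only
  -- propositionally.
  convert pow_mul_aeval_qAux_eq (RatFunc.X_ne_zero (K := ℚ)) _ using 4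
  all_goals exact Subsingleton.elim _ _
end

section
/- For every odd negative integer n, q_n(w) - w · q_n'(w) ≡ (w+1)^2 (mod 2), where q_n' denotes the formal derivative of q_n. -/
open Polynomial

/-!
The operator `E p = p - X p'` is `R`-linear, and it commutes with multiplication by any `g`
with `g' = 0`.  In characteristic `2` this applies to `g = X² - 1`, so the recurrence
`q_{n} = (X² - 1)(q_{n+2} - q_{n+4}) + q_{n+6}` is transported to `E q_n` modulo `2`.  Hence
`E q_n ≡ (X + 1)²` for all `n` as soon as it holds for the three initial polynomials, where it is
a direct computation.
-/

namespace Polynomial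

variable {R : Type*} [CommRing R]

noncomputable def subXMulDerivative : R[X] →ₗ[R] R[X] :=
  LinearMap.id - LinearMap.mulLeft R X ∘ₗ derivative

theorem subXMulDerivative_apply (p : R[X]) :
    subXMulDerivative p = p - X * derivative p :=
  rfl

theorem subXMulDerivative_mul_of_derivative_eq_zero {g : R[X]} (hg : derivative g = 0)
    (p : R[X]) : subXMulDerivative (g * p) = g * subXMulDerivative p := by
  simp only [subXMulDerivative_apply, derivative_mul, hg]
  ring

theorem derivative_X_sq_sub_one [CharP R 2] : derivative (X ^ 2 - 1 : R[X]) = 0 := by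
  simp [CharTwo.add_self_eq_zero]

theorem subXMulDerivative_eq_of_recurrence {g c : R[X]} {p : ℕ → R[X]} (hg : derivative g = 0)
    (hrec : ∀ k, p (k + 3) = g * (p (k + 2) - p (k + 1)) + p k)
    (h0 : subXMulDerivative (p 0) = c) (h1 : subXMulDerivative (p 1) = c)
    (h2 : subXMulDerivative (p 2) = c) (k : ℕ) : subXMulDerivative (p k) = c := by
  induction k using Nat.strongRecOn with
  | ind k ih =>
    match k, ih with
    | 0, _ => exact h0
    | 1, _ => exact h1
    | 2, _ => exact h2
    | k + 3, ih =>
      rw [hrec, map_add, subXMulDerivative_mul_of_derivative_eq_zero hg,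
        map_sub, ih (k + 2) (by omega), ih (k + 1) (by omega), ih k (by omega), sub_self,
        mul_zero, zero_add]

end Polynomial

theorem qAux_map_succ_succ_succ {R : Type*} [CommRing R] (f : ℤ →+* R) (k : ℕ) :
    (qAux (k + 3)).map f =
      (X ^ 2 - 1) * ((qAux (k + 2)).map f - (qAux (k + 1)).map f) + (qAux k).map f := by
  simp [qAux]

theorem subXMulDerivative_qAux_map (k : ℕ) :
    subXMulDerivative ((qAux k).map (Int.castRingHom (ZMod 2))) = (X + 1) ^ 2 := by
  refine subXMulDerivative_eq_of_recurrence (p := fun k ↦ (qAux k).map (Int.castRingHom (ZMod 2)))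
    derivative_X_sq_sub_one (qAux_map_succ_succ_succ _) ?_ ?_ ?_ k <;>
  · simp [subXMulDerivative_apply, qAux]
    ring_nf
    reduce_mod_char
    simp

theorem q_sub_w_deriv_mod_two_general (n : ℤ) :
    (qq n).map (Int.castRingHom (ZMod 2)) -
        X * derivative ((qq n).map (Int.castRingHom (ZMod 2))) =
      (X + 1) ^ 2 := by
  rw [qq, ← subXMulDerivative_apply]
  exact subXMulDerivative_qAux_map _

/-- For every odd negative integer `n`,
`q_n(w) - w * q_n'(w) ≡ (w+1)^2 (mod 2)`, i.e. equality holds in `𝔽₂[w]`. -/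
theorem q_sub_w_deriv_mod_two (n : ℤ) (hodd : Odd n) (hneg : n < 0) :
    (qq n).map (Int.castRingHom (ZMod 2)) -
        X * derivative ((qq n).map (Int.castRingHom (ZMod 2))) =
      (X + 1) ^ 2 :=
  q_sub_w_deriv_mod_two_general n
end

section
/- For every odd negative integer n divisible by 3 with n ≡ 1 (mod 4), q_n(√3) = -12 + 6√3, as an evaluation in the ring ℤ[√3]. -/
/-!
At `w = √3` the factor `w² - 1` equals `2`, so the values `v k = q_{-(2k+1)}(√3)` satisfy
`v (k + 3) = 2 (v (k + 2) - v (k + 1)) + v k`. Its characteristic polynomial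
`x³ - 2x² + 2x - 1 = (x - 1)(x² - x + 1)` divides `x⁶ - 1`, so `v` has period `6`.
The hypotheses on `n` force `k = (-1 - n) / 2 ≡ 1 (mod 6)`, and `q_{-3}(√3) = -12 + 6√3`.
-/

open Polynomial

theorem Function.periodic_six_of_recurrence {M : Type*} [AddCommGroup M] {u : ℕ → M}
    (h : ∀ k, u (k + 3) = 2 • (u (k + 2) - u (k + 1)) + u k) :
    Function.Periodic u 6 := by
  intro k
  rw [show k + 6 = k + 3 + 3 from rfl, h, h (k + 2), h (k + 1), h k]
  module

theorem aeval_qAux_add_three {A : Type*} [CommRing A] (x : A) (k : ℕ) :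
    aeval x (qAux (k + 3)) =
      (x ^ 2 - 1) * (aeval x (qAux (k + 2)) - aeval x (qAux (k + 1))) + aeval x (qAux k) := by
  simp only [qAux, map_add, map_mul, map_sub, map_pow, map_one, aeval_X]

theorem aeval_sqrt_three_qAux_one : aeval (Real.sqrt 3) (qAux 1) = -12 + 6 * Real.sqrt 3 := by
  have hs : Real.sqrt 3 ^ 2 = 3 := Real.sq_sqrt (by norm_num)
  simp only [qAux, map_sub, map_add, map_mul, map_pow, map_ofNat, aeval_X]
  linear_combination (Real.sqrt 3 ^ 3 - 2 * Real.sqrt 3 ^ 2 + Real.sqrt 3 - 1) * hs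

theorem toNat_neg_one_sub_div_two_mod_six {n : ℤ} (hneg : n < 0) (h3 : 3 ∣ n) (h4 : n % 4 = 1) :
    ((-1 - n) / 2).toNat % 6 = 1 := by
  omega

theorem q_eval_sqrt_three_general (n : ℤ) (hneg : n < 0)
    (h3 : 3 ∣ n) (h4 : n % 4 = 1) :
    Polynomial.aeval (Real.sqrt 3) (qq n) = -12 + 6 * Real.sqrt 3 := by
  have hs : Real.sqrt 3 ^ 2 - 1 = 2 := by rw [Real.sq_sqrt (by norm_num)]; norm_num
  have hper : Function.Periodic (fun k ↦ aeval (Real.sqrt 3) (qAux k)) 6 :=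
    Function.periodic_six_of_recurrence fun k ↦ by
      rw [aeval_qAux_add_three, hs, two_smul, two_mul]
  rw [qq, ← hper.map_mod_nat, toNat_neg_one_sub_div_two_mod_six hneg h3 h4,
    aeval_sqrt_three_qAux_one]

/-- For every odd negative integer `n` divisible by `3` with `n ≡ 1 (mod 4)`,
`q_n(√3) = -12 + 6√3` (evaluated in `ℤ[√3] ⊆ ℝ`). -/
theorem q_eval_sqrt_three (n : ℤ) (hodd : Odd n) (hneg : n < 0)
    (h3 : 3 ∣ n) (h4 : n % 4 = 1) :
    Polynomial.aeval (Real.sqrt 3) (qq n) = -12 + 6 * Real.sqrt 3 :=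
  q_eval_sqrt_three_general n hneg h3 h4
end

section
/- For every odd negative integer n, the polynomial q_n has no monic quadratic factor f ∈ ℤ[w] with f ≡ (w+1)^2 (mod 2) whose splitting field is ℚ(i). Equivalently: there is no monic quadratic f = w^2 + 2aw + (2b+1) ∈ ℤ[w] dividing q_n in ℤ[w] with discriminant of the form -4d^2 for a nonzero integer d. -/
/-!
Let `f = X^2 + 2aX + c` with `c = a^2 + d^2` and `d ≠ 0`, and suppose `f ∣ q_n`.
Since `q_n(2) = 1`, the value `f(2) = (a + 2)^2 + d^2` is a positive unit, so `a = -2`,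
`d^2 = 1` and `f(0) = c = 5`. But `f(0)` divides `q_n(0) ∈ {-7, -9}`.
-/

open Polynomial

theorem qAux_eval_two : ∀ k, (qAux k).eval 2 = 1
  | 0 | 1 | 2 => by norm_num [qAux]
  | k + 3 => by
    simp [qAux, qAux_eval_two k, qAux_eval_two (k + 1), qAux_eval_two (k + 2)]

theorem qAux_eval_zero : ∀ k, (qAux k).eval 0 = -8 + (-1) ^ k
  | 0 | 1 | 2 => by norm_num [qAux]
  | k + 3 => by
    simp only [qAux, eval_add, eval_mul, eval_sub, eval_pow, eval_X, eval_one,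
      qAux_eval_zero k, qAux_eval_zero (k + 1), qAux_eval_zero (k + 2)]
    ring

theorem qq_eval_two (n : ℤ) : (qq n).eval 2 = 1 :=
  qAux_eval_two _

theorem qq_eval_zero (n : ℤ) : (qq n).eval 0 = -7 ∨ (qq n).eval 0 = -9 := by
  rw [qq, qAux_eval_zero]
  rcases neg_one_pow_eq_or ℤ ((-1 - n) / 2).toNat with h | h <;> rw [h] <;> norm_num

theorem const_eq_five_of_quadratic_dvd {q : ℤ[X]} (hq : q.eval 2 = 1) {a c d : ℤ}
    (hd : d ≠ 0) (hc : c = a ^ 2 + d ^ 2) (h : X ^ 2 + C (2 * a) * X + C c ∣ q) : c = 5 := by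
  have hunit : IsUnit ((a + 2) ^ 2 + d ^ 2) := by
    have h2 := eval_dvd (x := 2) h
    simp only [eval_add, eval_mul, eval_pow, eval_X, eval_C, hq] at h2
    exact isUnit_of_dvd_one (by convert h2 using 1; rw [hc]; ring)
  have hd2 : 0 < d ^ 2 := by positivity
  have hsum : (a + 2) ^ 2 + d ^ 2 = 1 := by
    rcases Int.isUnit_iff.mp hunit with h1 | h1
    · exact h1
    · nlinarith [sq_nonneg (a + 2)]
  have ha : a = -2 := by nlinarith [sq_nonneg (a + 2)]
  subst ha
  omega

theorem q_no_Qi_quadratic_factor_general (n : ℤ) :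
    ¬ ∃ a b d : ℤ, d ≠ 0 ∧ a ^ 2 - 2 * b - 1 = -d ^ 2 ∧
      (X ^ 2 + C (2 * a) * X + C (2 * b + 1)) ∣ qq n := by
  rintro ⟨a, b, d, hd, hdisc, hdvd⟩
  have h5 : 2 * b + 1 = 5 :=
    const_eq_five_of_quadratic_dvd (qq_eval_two n) hd (by linarith) hdvd
  have h0 := eval_dvd (x := 0) hdvd
  simp only [eval_add, eval_mul, eval_pow, eval_X, eval_C, h5] at h0
  rcases qq_eval_zero n with h | h <;> rw [h] at h0 <;> norm_num at h0

/-- For every odd negative integer `n`, there is no monic quadratic factor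
`f = w^2 + 2a*w + (2b+1)` of `q_n` in `ℤ[w]` (such `f` reduces to `(w+1)^2`
mod `2`) whose discriminant has the form `-4d^2` with `d ≠ 0` (i.e. whose
splitting field is `ℚ(i)`). -/
theorem q_no_Qi_quadratic_factor (n : ℤ) (hodd : Odd n) (hneg : n < 0) :
    ¬ ∃ a b d : ℤ, d ≠ 0 ∧ a ^ 2 - 2 * b - 1 = -d ^ 2 ∧
      (X ^ 2 + C (2 * a) * X + C (2 * b + 1)) ∣ qq n :=
  q_no_Qi_quadratic_factor_general n
end

section
/- For every odd negative integer n with 3 ∤ n, the reduction of q_n modulo 2 is squarefree in 𝔽₂[w]; moreover, if 3 | n, then (w+1)^2 divides q_n mod 2 but (w+1)^3 does not, and q_n/(w+1)^2 mod 2 is coprime to (w+1). -/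
/-!
Over `𝔽₂` the reduction of `q_{-(2k+1)}` has the shape `(w+1)² + w·B_k²`, where
`B_k = oddSqrt k` obeys `B_{k+3} = (w+1)(B_{k+2} + B_{k+1}) + B_k`. Its derivative is `B_k²`,
so it is separable as soon as `w+1 ∤ B_k`. Evaluated at `1` the recurrence becomes 3-periodic,
and `B_k(1) = 0` exactly when `k ≡ 1 (mod 3)`, i.e. when `3 ∣ n`. Modulo `(w+1)²` the
recurrence is 6-periodic, which gives `(w+1)² ∣ B_k` for those `k`; then the reduction is
`(w+1)²(1 + w(w+1)²E²)` and the cofactor does not vanish at `1`.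
-/

open Polynomial

theorem separable_sq_add_X_mul_sq {R : Type*} [CommRing R] [CharP R 2] {a b : R[X]}
    (h : IsCoprime a b) : (a ^ 2 + X * b ^ 2).Separable := by
  have hder : derivative (a ^ 2 + X * b ^ 2) = b ^ 2 := by
    simp only [derivative_add, derivative_mul, derivative_sq, derivative_X,
      CharTwo.two_eq_zero, C_0]
    ring
  rw [separable_def, hder]
  exact h.pow.add_mul_right_left X

theorem isCoprime_X_sub_C_of_not_isRoot {K : Type*} [Field K] {a : K} {g : K[X]}
    (hg : ¬ g.IsRoot a) : IsCoprime (X - C a) g :=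
  (irreducible_X_sub_C a).coprime_iff_not_dvd.2 (mt dvd_iff_isRoot.1 hg)

theorem not_X_sub_C_pow_succ_dvd_mul {R : Type*} [CommRing R] [IsDomain R] {a : R} {g : R[X]}
    (hg : ¬ g.IsRoot a) (n : ℕ) : ¬ (X - C a) ^ (n + 1) ∣ (X - C a) ^ n * g := by
  rw [pow_succ', mul_comm (X - C a), mul_dvd_mul_iff_left (pow_ne_zero n (X_sub_C_ne_zero a)),
    dvd_iff_isRoot]
  exact hg

theorem periodic_six_of_sq_eq_zero {R : Type*} [CommRing R] (h2 : (2 : R) = 0) {x : R}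
    (hx : x ^ 2 = 0) {b : ℕ → R} (hb : ∀ k, b (k + 3) = x * (b (k + 2) + b (k + 1)) + b k) :
    Function.Periodic b 6 := by
  have hxb : ∀ k, x * b (k + 3) = x * b k := fun k => by
    rw [hb]; linear_combination (b (k + 2) + b (k + 1)) * hx
  intro k
  calc b (k + 6) = x * (b (k + 2) + b (k + 1)) + b (k + 3) := by
        rw [hb (k + 3), mul_add, hxb (k + 2), hxb (k + 1), mul_add]
    _ = b k := by rw [hb k]; linear_combination (x * (b (k + 2) + b (k + 1))) * h2

noncomputable def oddSqrt : ℕ → (ZMod 2)[X]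
  | 0 => X
  | 1 => X ^ 2 + 1
  | 2 => X ^ 3
  | (k + 3) => (X + 1) * (oddSqrt (k + 2) + oddSqrt (k + 1)) + oddSqrt k

theorem map_qAux :
    ∀ k, (qAux k).map (Int.castRingHom (ZMod 2)) = (X + 1) ^ 2 + X * oddSqrt k ^ 2
  | 0 | 1 | 2 => by
    simp only [qAux, oddSqrt, Polynomial.map_sub, Polynomial.map_add, Polynomial.map_mul,
      Polynomial.map_pow, Polynomial.map_X, Polynomial.map_ofNat]
    ring_nf
    reduce_mod_char
  | k + 3 => by
    simp only [qAux, oddSqrt, Polynomial.map_sub, Polynomial.map_add, Polynomial.map_mul,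
      Polynomial.map_pow, Polynomial.map_X, Polynomial.map_one, map_qAux k, map_qAux (k + 1),
      map_qAux (k + 2)]
    ring_nf
    reduce_mod_char

theorem X_add_one_eq_X_sub_C_one : (X + 1 : (ZMod 2)[X]) = X - C 1 := by
  rw [C_1, CharTwo.sub_eq_add]

theorem oddSqrt_periodic_mod_X_add_one_sq :
    Function.Periodic
      (fun k => Ideal.Quotient.mk (Ideal.span {(X + 1 : (ZMod 2)[X]) ^ 2}) (oddSqrt k)) 6 := by
  refine periodic_six_of_sq_eq_zero (x := Ideal.Quotient.mk _ (X + 1)) ?_ ?_ fun k => ?_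
  · rw [← map_ofNat (Ideal.Quotient.mk _) 2, CharTwo.two_eq_zero (R := (ZMod 2)[X]), map_zero]
  · rw [← map_pow, Ideal.Quotient.eq_zero_iff_mem]
    exact Ideal.mem_span_singleton_self _
  · simp only [oddSqrt, map_add, map_mul]

theorem X_add_one_sq_dvd_oddSqrt {k : ℕ} (hk : k % 3 = 1) : (X + 1) ^ 2 ∣ oddSqrt k := by
  have h := oddSqrt_periodic_mod_X_add_one_sq.map_mod_nat k
  simp only [Ideal.Quotient.eq, Ideal.mem_span_singleton] at h
  have h6 : (X + 1) ^ 2 ∣ oddSqrt (k % 6) := by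
    obtain h | h : k % 6 = 1 ∨ k % 6 = 4 := by omega
    · rw [h]
      exact ⟨1, by simp only [oddSqrt]; ring_nf; reduce_mod_char⟩
    · rw [h]
      exact ⟨X * (X + 1) ^ 2, by simp only [oddSqrt]; ring_nf; reduce_mod_char⟩
  simpa using dvd_sub h6 h

theorem eval_one_oddSqrt_periodic : Function.Periodic (fun k => (oddSqrt k).eval 1) 3 := by
  intro k
  simp only [oddSqrt, eval_add, eval_mul, eval_X, eval_one]
  reduce_mod_char

theorem eval_one_oddSqrt {k : ℕ} (hk : k % 3 ≠ 1) : (oddSqrt k).eval 1 = 1 := by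
  rw [← eval_one_oddSqrt_periodic.map_mod_nat k]
  obtain h | h : k % 3 = 0 ∨ k % 3 = 2 := by omega
  all_goals simp [h, oddSqrt]

theorem qq_neg_two_mul_add_one (k : ℕ) : qq (-(2 * k + 1)) = qAux k := by
  rw [qq]
  congr
  omega

/-- For every odd negative integer `n`: if `3 ∤ n` then the reduction of `q_n`
mod `2` is squarefree in `𝔽₂[w]`; if `3 ∣ n` then `(w+1)^2` divides `q_n` mod
`2`, `(w+1)^3` does not, and `(q_n mod 2)/(w+1)^2` is coprime to `w+1`. -/
theorem q_mod_two_factorization (n : ℤ) (hodd : Odd n) (hneg : n < 0) :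
    (¬ (3 ∣ n) → Squarefree ((qq n).map (Int.castRingHom (ZMod 2)))) ∧
    (3 ∣ n →
      ((X + 1) ^ 2 ∣ (qq n).map (Int.castRingHom (ZMod 2)) ∧
       ¬ (X + 1) ^ 3 ∣ (qq n).map (Int.castRingHom (ZMod 2)) ∧
       IsCoprime ((qq n).map (Int.castRingHom (ZMod 2)) / (X + 1) ^ 2)
         (X + 1 : Polynomial (ZMod 2)))) := by
  obtain ⟨k, rfl⟩ : ∃ k : ℕ, n = -(2 * k + 1) := by
    obtain ⟨m, rfl⟩ := hodd
    exact ⟨(-m - 1).toNat, by omega⟩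
  have h3 : 3 ∣ -(2 * (k : ℤ) + 1) ↔ k % 3 = 1 := by omega
  rw [qq_neg_two_mul_add_one, map_qAux, h3]
  refine ⟨fun hk => ?_, fun hk => ?_⟩
  · have hroot : ¬ (oddSqrt k).IsRoot 1 := by
      rw [IsRoot.def, eval_one_oddSqrt hk]
      exact one_ne_zero
    rw [X_add_one_eq_X_sub_C_one]
    exact (separable_sq_add_X_mul_sq (isCoprime_X_sub_C_of_not_isRoot hroot)).squarefree
  · obtain ⟨e, he⟩ := X_add_one_sq_dvd_oddSqrt hk
    rw [he, X_add_one_eq_X_sub_C_one]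
    set g : (ZMod 2)[X] := 1 + X * (X - C 1) ^ 2 * e ^ 2
    have hfac : (X - C 1) ^ 2 + X * ((X - C 1) ^ 2 * e) ^ 2 = (X - C 1) ^ 2 * g := by ring
    have hg : ¬ g.IsRoot 1 := by simp [g]
    rw [hfac, mul_div_cancel_left₀ _ (pow_ne_zero _ (X_sub_C_ne_zero 1))]
    exact ⟨dvd_mul_right _ _, not_X_sub_C_pow_succ_dvd_mul hg 2,
      (isCoprime_X_sub_C_of_not_isRoot hg).symm⟩
end

section
/- For odd negative integers n divisible by 3: if n ≡ 3 (mod 4) then w does not divide q_n in 𝔽₃[w]; if n ≡ 1 (mod 4) then w^2 divides q_n in 𝔽₃[w] but w^3 does not. -/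
open Polynomial

/-!
Reduce mod `3` and keep only the coefficients of `1, w, w²`. Since
`(w² - 1)(a + b w + c w²) ≡ -a - b w + (a - c) w²` modulo `w³`, the recurrence acts on
windows of three consecutive such coefficient triples by a map of the finite set
`(𝔽₃³)³`, and the orbit of the initial window has period `6`. For odd `n = -(2k+1)`
with `3 ∣ n`, the condition `n ≡ 3 (mod 4)` means `k ≡ 4 (mod 6)`, where the triple is
`(2, 2, 1)`, and `n ≡ 1 (mod 4)` means `k ≡ 1 (mod 6)`, where it is `(0, 0, 2)`.
-/

section LowCoeffs

variable {R : Type*} [CommRing R]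

def lowCoeffs (p : R[X]) : R × R × R := (p.coeff 0, p.coeff 1, p.coeff 2)

lemma lowCoeffs_add (p q : R[X]) : lowCoeffs (p + q) = lowCoeffs p + lowCoeffs q := by
  simp [lowCoeffs]

lemma lowCoeffs_sub (p q : R[X]) : lowCoeffs (p - q) = lowCoeffs p - lowCoeffs q := by
  simp [lowCoeffs]

def mulXSqSubOne (a : R × R × R) : R × R × R := (-a.1, -a.2.1, a.1 - a.2.2)

lemma lowCoeffs_X_sq_sub_one_mul (p : R[X]) :
    lowCoeffs ((X ^ 2 - 1) * p) = mulXSqSubOne (lowCoeffs p) := by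
  simp [lowCoeffs, mulXSqSubOne, sub_mul, coeff_X_pow_mul']

lemma not_X_dvd_of_lowCoeffs_eq {p : R[X]} {a b c : R} (h : lowCoeffs p = (a, b, c))
    (ha : a ≠ 0) : ¬ X ∣ p := by
  rw [X_dvd_iff]
  simp only [lowCoeffs, Prod.mk.injEq] at h
  rwa [h.1]

lemma X_sq_dvd_and_not_X_pow_three_dvd_of_lowCoeffs_eq {p : R[X]} {c : R}
    (h : lowCoeffs p = (0, 0, c)) (hc : c ≠ 0) : X ^ 2 ∣ p ∧ ¬ X ^ 3 ∣ p := by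
  simp only [lowCoeffs, Prod.mk.injEq] at h
  obtain ⟨h0, h1, h2⟩ := h
  refine ⟨X_pow_dvd_iff.mpr fun d hd => ?_, fun h3 => hc ?_⟩
  · interval_cases d <;> assumption
  · rw [← h2]
    exact X_pow_dvd_iff.mp h3 2 (by norm_num)

def windowStep (w : (R × R × R) × (R × R × R) × (R × R × R)) :
    (R × R × R) × (R × R × R) × (R × R × R) :=
  (w.2.1, w.2.2, mulXSqSubOne (w.2.2 - w.2.1) + w.1)

end LowCoeffs

noncomputable def qMod3 (k : ℕ) : (ZMod 3)[X] := (qAux k).map (Int.castRingHom (ZMod 3))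

lemma qMod3_add_three (k : ℕ) :
    qMod3 (k + 3) = (X ^ 2 - 1) * (qMod3 (k + 2) - qMod3 (k + 1)) + qMod3 k := by
  simp [qMod3, qAux]

noncomputable def qMod3Window (k : ℕ) :
    (ZMod 3 × ZMod 3 × ZMod 3) × (ZMod 3 × ZMod 3 × ZMod 3) × (ZMod 3 × ZMod 3 × ZMod 3) :=
  (lowCoeffs (qMod3 k), lowCoeffs (qMod3 (k + 1)), lowCoeffs (qMod3 (k + 2)))

lemma qMod3Window_succ (k : ℕ) : qMod3Window (k + 1) = windowStep (qMod3Window k) := by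
  simp only [qMod3Window, windowStep, qMod3_add_three, lowCoeffs_add,
    lowCoeffs_X_sq_sub_one_mul, lowCoeffs_sub]

lemma qMod3Window_zero : qMod3Window 0 = ((2, 2, 2), (0, 0, 2), (2, 2, 2)) := by
  simp [qMod3Window, lowCoeffs, qMod3, qAux, coeff_X, coeff_X_pow]
  decide

lemma qMod3Window_eq_iterate_mod_six (k : ℕ) :
    qMod3Window k = windowStep^[k % 6] (qMod3Window 0) := by
  have hper : Function.IsPeriodicPt windowStep 6 (qMod3Window 0) := by
    rw [qMod3Window_zero]
    decide
  rw [hper.iterate_mod_apply]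
  induction k with
  | zero => rfl
  | succ k ih => rw [qMod3Window_succ, ih, Function.iterate_succ_apply']

lemma lowCoeffs_qMod3_of_mod_six_eq_four {k : ℕ} (hk : k % 6 = 4) :
    lowCoeffs (qMod3 k) = (2, 2, 1) := by
  change (qMod3Window k).1 = _
  rw [qMod3Window_eq_iterate_mod_six, hk, qMod3Window_zero]
  decide

lemma lowCoeffs_qMod3_of_mod_six_eq_one {k : ℕ} (hk : k % 6 = 1) :
    lowCoeffs (qMod3 k) = (0, 0, 2) := by
  change (qMod3Window k).1 = _
  rw [qMod3Window_eq_iterate_mod_six, hk, qMod3Window_zero]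
  decide

/-- For odd negative integers `n` divisible by `3`: if `n ≡ 3 (mod 4)` then
`w` does not divide `q_n` in `𝔽₃[w]`; if `n ≡ 1 (mod 4)` then `w^2` divides
`q_n` in `𝔽₃[w]` but `w^3` does not. -/
theorem q_mod_three_w_divisibility (n : ℤ) (hodd : Odd n) (hneg : n < 0)
    (h3 : 3 ∣ n) :
    (n % 4 = 3 → ¬ (X : Polynomial (ZMod 3)) ∣ (qq n).map (Int.castRingHom (ZMod 3))) ∧
    (n % 4 = 1 →
      ((X : Polynomial (ZMod 3)) ^ 2 ∣ (qq n).map (Int.castRingHom (ZMod 3)) ∧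
       ¬ (X : Polynomial (ZMod 3)) ^ 3 ∣ (qq n).map (Int.castRingHom (ZMod 3)))) := by
  have hmap : (qq n).map (Int.castRingHom (ZMod 3)) = qMod3 ((-1 - n) / 2).toNat := rfl
  obtain ⟨m, rfl⟩ := hodd
  rw [hmap]
  refine ⟨fun h4 => ?_, fun h4 => ?_⟩
  · have hk : ((-1 - (2 * m + 1)) / 2).toNat % 6 = 4 := by omega
    exact not_X_dvd_of_lowCoeffs_eq (lowCoeffs_qMod3_of_mod_six_eq_four hk) (by decide)
  · have hk : ((-1 - (2 * m + 1)) / 2).toNat % 6 = 1 := by omega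
    exact X_sq_dvd_and_not_X_pow_three_dvd_of_lowCoeffs_eq
      (lowCoeffs_qMod3_of_mod_six_eq_one hk) (by decide)
end

section
/- For every odd negative integer n divisible by 3, q_n - (1 - w)·q_n' ≡ -w (mod 3), where q_n' is the formal derivative. -/
open Polynomial

/-! Over `𝔽₃` put `L p = ((w - 1) p)' = p - (1 - w) p'`, so the claim is `L q_n = -w`.
The polynomials `a_k = q_{-(2k+1)}` satisfy `a_{k+3} = c (a_{k+2} - a_{k+1}) + a_k` with
`c = w² - 1`, and in characteristic 3 every third term satisfies the same recurrence with `c³` in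
place of `c`. As `c³` has zero derivative, `L` commutes with multiplication by it, so the sequence
`L a_{3m+1}` obeys that recurrence too; it equals `-w` for `m = 0, 1, 2` by direct computation,
hence for all `m`. -/

section QRecurrence

variable {R : Type*} [CommRing R]

def QRecurrence (c : R) (a : ℕ → R) : Prop :=
  ∀ k, a (k + 3) = c * (a (k + 2) - a (k + 1)) + a k

namespace QRecurrence

variable {c : R} {a : ℕ → R}

theorem map {S : Type*} [CommRing S] (h : QRecurrence c a) (f : R →+* S) :
    QRecurrence (f c) (fun k ↦ f (a k)) := fun k ↦ by
  simp only [h k, map_add, map_mul, map_sub]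

/- The characteristic polynomial is `(t - 1) (t² - (c - 2) t + 1)`; cubing the roots of the
second factor turns `c - 2` into `(c - 2)³ - 3 (c - 2)`, which is `c³ - 2` in characteristic 3. -/
theorem add_nine [CharP R 3] (h : QRecurrence c a) (k : ℕ) :
    a (k + 9) = c ^ 3 * (a (k + 6) - a (k + 3)) + a k := by
  have h3 : (3 : R) = 0 := by exact_mod_cast CharP.cast_eq_zero R 3
  linear_combination h (k + 6) + c * h (k + 5) + (c ^ 2 - c) * h (k + 4)
    + (c ^ 2 - 2) * h (k + 3) + (c ^ 2 - c) * h (k + 2) + c * h (k + 1) + h k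
    + (1 - c ^ 2) * (a (k + 6) - a (k + 3)) * h3

theorem comp_three_mul_add [CharP R 3] (h : QRecurrence c a) (j : ℕ) :
    QRecurrence (c ^ 3) (fun m ↦ a (3 * m + j)) := fun m ↦ by
  simpa only [show 3 * (m + 3) + j = 3 * m + j + 9 by ring,
    show 3 * (m + 2) + j = 3 * m + j + 6 by ring,
    show 3 * (m + 1) + j = 3 * m + j + 3 by ring] using h.add_nine (3 * m + j)

theorem derivative_mul {c : R[X]} {a : ℕ → R[X]} (h : QRecurrence c a) (hc : derivative c = 0)
    (p : R[X]) : QRecurrence c (fun k ↦ derivative (p * a k)) := fun k ↦ by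
  simp only [h k, mul_add, mul_sub, mul_left_comm p c, derivative_add, derivative_sub,
    Polynomial.derivative_mul, hc, zero_mul, zero_add]

theorem eq_of_initial {v : R} (h : QRecurrence c a) (h0 : a 0 = v) (h1 : a 1 = v) (h2 : a 2 = v)
    (m : ℕ) : a m = v := by
  suffices ∀ m, a m = v ∧ a (m + 1) = v ∧ a (m + 2) = v from (this m).1
  intro m
  induction m with
  | zero => exact ⟨h0, h1, h2⟩
  | succ m ih =>
    obtain ⟨hm0, hm1, hm2⟩ := ih
    refine ⟨hm1, hm2, ?_⟩
    rw [h m, hm0, hm1, hm2]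
    ring

end QRecurrence

end QRecurrence

theorem qRecurrence_qAux : QRecurrence (X ^ 2 - 1) qAux := fun _ ↦ rfl

theorem derivative_pow_charP {R : Type*} [CommSemiring R] (p : ℕ) [CharP R p] (f : R[X]) :
    derivative (f ^ p) = 0 := by
  rw [derivative_pow, CharP.cast_eq_zero, C_0, zero_mul, zero_mul]

theorem derivative_X_sub_one_mul {R : Type*} [CommRing R] (p : R[X]) :
    derivative ((X - 1) * p) = p - (1 - X) * derivative p := by
  rw [Polynomial.derivative_mul, derivative_sub, derivative_X, derivative_one]
  ring

theorem derivative_X_sub_one_mul_map_qAux {k : ℕ} (hk : k = 1 ∨ k = 4 ∨ k = 7) :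
    derivative ((X - 1) * (qAux k).map (Int.castRingHom (ZMod 3))) = -X := by
  rw [eq_neg_iff_add_eq_zero]
  rcases hk with rfl | rfl | rfl <;>
  · simp only [qAux, Polynomial.map_add, Polynomial.map_sub, Polynomial.map_mul,
      Polynomial.map_pow, Polynomial.map_X, Polynomial.map_one, Polynomial.map_ofNat,
      Polynomial.derivative_mul, derivative_add, derivative_sub, derivative_pow, derivative_X,
      derivative_one, derivative_ofNat, map_natCast]
    ring_nf
    reduce_mod_char

/-- For every odd negative integer `n` divisible by `3`,
`q_n - (1 - w) * q_n' ≡ -w (mod 3)`, i.e. equality holds in `𝔽₃[w]`. -/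
theorem q_deriv_identity_mod_three (n : ℤ) (hodd : Odd n) (hneg : n < 0)
    (h3 : 3 ∣ n) :
    (qq n).map (Int.castRingHom (ZMod 3)) -
        (1 - X) * derivative ((qq n).map (Int.castRingHom (ZMod 3))) =
      -X := by
  obtain ⟨m, hm⟩ : ∃ m : ℕ, ((-1 - n) / 2).toNat = 3 * m + 1 := by
    obtain ⟨j, rfl⟩ := hodd
    obtain ⟨t, ht⟩ := h3
    exact ⟨((-(2 * j + 1) - 3) / 6).toNat, by omega⟩
  have ha : QRecurrence (X ^ 2 - 1) (fun k ↦ (qAux k).map (Int.castRingHom (ZMod 3))) := by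
    simpa only [coe_mapRingHom, Polynomial.map_sub, Polynomial.map_pow, Polynomial.map_X,
      Polynomial.map_one] using qRecurrence_qAux.map (mapRingHom (Int.castRingHom (ZMod 3)))
  have hrec := (ha.comp_three_mul_add 1).derivative_mul (derivative_pow_charP 3 _) (X - 1)
  rw [qq, hm, ← derivative_X_sub_one_mul]
  exact hrec.eq_of_initial (derivative_X_sub_one_mul_map_qAux (by simp))
    (derivative_X_sub_one_mul_map_qAux (by simp))
    (derivative_X_sub_one_mul_map_qAux (by simp)) m
end

section
/- For every odd negative integer n divisible by 3, the following identity holds in 𝔽₃[w]: q_{n+2} - q_{n+4} + (w^2 - 1)(q_{n+2}' - q_{n+4}') ≡ 0 (mod 3). -/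
/-!
Put `a_k = q_{-(2k+3)} - q_{-(2k+1)}` reduced mod 3. The recurrence for `q` gives
`a_{k+2} = (w² - 2) a_{k+1} - a_k = (w² + 1) a_{k+1} - a_k`, and iterating three times,
`a_{k+6} = (t³ - 3t) a_{k+3} - a_k` with `t = w² + 1`, i.e. `a_{k+6} = (w⁶ + 1) a_{k+3} - a_k`
in characteristic 3. Since `(w⁶ + 1)' = 6w⁵ = 0`, the operator `f ↦ f + (w² - 1) f'` commutes with
multiplication by `w⁶ + 1`, so its kernel contains every `a_{3j+2}` as soon as it contains `a_2`
and `a_5`, which is a direct computation. For `n = -(6j + 9)` the claimed identity is exactly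
`a_{3j+2} + (w² - 1) a_{3j+2}' = 0`.
-/

open Polynomial

theorem add_six_eq_of_add_two_eq {R : Type*} [CommRing R] {u : ℕ → R} {t : R}
    (hu : ∀ k, u (k + 2) = t * u (k + 1) - u k) (k : ℕ) :
    u (k + 6) = (t ^ 3 - 3 * t) * u (k + 3) - u k := by
  have h6 : u (k + 6) = t * u (k + 5) - u (k + 4) := hu (k + 4)
  have h5 : u (k + 5) = t * u (k + 4) - u (k + 3) := hu (k + 3)
  have h4 : u (k + 4) = t * u (k + 3) - u (k + 2) := hu (k + 2)
  have h3 : u (k + 3) = t * u (k + 2) - u (k + 1) := hu (k + 1)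
  have h2 : u (k + 2) = t * u (k + 1) - u k := hu k
  rw [h6, h5, h4, h3, h2]
  ring

theorem derivative_mul_of_derivative_eq_zero {R : Type*} [CommRing R] {c : R[X]}
    (hc : derivative c = 0) (f : R[X]) : derivative (c * f) = c * derivative f := by
  rw [derivative_mul, hc, zero_mul, zero_add]

theorem add_mul_derivative_eq_zero_of_recurrence {R : Type*} [CommRing R] {b : ℕ → R[X]}
    {c g : R[X]} (hc : derivative c = 0) (hb : ∀ j, b (j + 2) = c * b (j + 1) - b j)
    (h0 : b 0 + g * derivative (b 0) = 0) (h1 : b 1 + g * derivative (b 1) = 0) (j : ℕ) :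
    b j + g * derivative (b j) = 0 := by
  induction j using Nat.twoStepInduction with
  | zero => exact h0
  | one => exact h1
  | more j ih0 ih1 =>
    rw [hb, derivative_sub, derivative_mul_of_derivative_eq_zero hc]
    linear_combination c * ih1 - ih0

noncomputable def qDiffMod3 (k : ℕ) : (ZMod 3)[X] :=
  (qAux (k + 1) - qAux k).map (Int.castRingHom (ZMod 3))

theorem qDiffMod3_add_two (k : ℕ) :
    qDiffMod3 (k + 2) = (X ^ 2 + 1) * qDiffMod3 (k + 1) - qDiffMod3 k := by
  have hq : qAux (k + 3) = (X ^ 2 - 1) * (qAux (k + 2) - qAux (k + 1)) + qAux k := by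
    rw [qAux]
  simp only [qDiffMod3, hq, Polynomial.map_sub, Polynomial.map_add, Polynomial.map_mul,
    Polynomial.map_pow, Polynomial.map_X, Polynomial.map_one]
  linear_combination ((qAux (k + 1)).map (Int.castRingHom (ZMod 3)) -
    (qAux (k + 2)).map (Int.castRingHom (ZMod 3))) * CharP.ofNat_eq_zero (ZMod 3)[X] 3

theorem qDiffMod3_add_six (k : ℕ) :
    qDiffMod3 (k + 6) = (X ^ 6 + 1) * qDiffMod3 (k + 3) - qDiffMod3 k := by
  have hcube : (X ^ 2 + 1 : (ZMod 3)[X]) ^ 3 - 3 * (X ^ 2 + 1) = X ^ 6 + 1 := by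
    ring_nf
    reduce_mod_char
  rw [add_six_eq_of_add_two_eq qDiffMod3_add_two, hcube]

theorem derivative_X_pow_six_add_one : derivative (X ^ 6 + 1 : (ZMod 3)[X]) = 0 := by
  rw [derivative_add, derivative_one, add_zero, derivative_X_pow, C_eq_natCast]
  reduce_mod_char

theorem qDiffMod3_two_add_mul_derivative :
    qDiffMod3 2 + (X ^ 2 - 1) * derivative (qDiffMod3 2) = 0 := by
  simp only [qDiffMod3, qAux, Polynomial.map_sub, Polynomial.map_add, Polynomial.map_mul,
    Polynomial.map_pow, Polynomial.map_X, Polynomial.map_one, Polynomial.map_ofNat,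
    derivative_add, derivative_sub, derivative_mul, derivative_X_pow, derivative_X,
    derivative_one, derivative_ofNat, Nat.cast_ofNat, map_ofNat]
  ring_nf
  reduce_mod_char

theorem qDiffMod3_five_add_mul_derivative :
    qDiffMod3 5 + (X ^ 2 - 1) * derivative (qDiffMod3 5) = 0 := by
  simp only [qDiffMod3, qAux, Polynomial.map_sub, Polynomial.map_add, Polynomial.map_mul,
    Polynomial.map_pow, Polynomial.map_X, Polynomial.map_one, Polynomial.map_ofNat,
    derivative_add, derivative_sub, derivative_mul, derivative_X_pow, derivative_X,
    derivative_one, derivative_ofNat, Nat.cast_ofNat, map_ofNat]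
  ring_nf
  reduce_mod_char

theorem qDiffMod3_three_mul_add_two_add_mul_derivative (j : ℕ) :
    qDiffMod3 (3 * j + 2) + (X ^ 2 - 1) * derivative (qDiffMod3 (3 * j + 2)) = 0 :=
  add_mul_derivative_eq_zero_of_recurrence (b := fun j ↦ qDiffMod3 (3 * j + 2))
    derivative_X_pow_six_add_one (fun j ↦ qDiffMod3_add_six (3 * j + 2))
    qDiffMod3_two_add_mul_derivative qDiffMod3_five_add_mul_derivative j

/-- For every odd negative integer `n ≤ -5` divisible by `3`, in `𝔽₃[w]`:
`q_{n+2} - q_{n+4} + (w^2 - 1)(q_{n+2}' - q_{n+4}') ≡ 0 (mod 3)`. -/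
theorem q_pair_identity_mod_three (n : ℤ) (hodd : Odd n) (hle : n ≤ -5)
    (h3 : 3 ∣ n) :
    (qq (n + 2)).map (Int.castRingHom (ZMod 3)) -
        (qq (n + 4)).map (Int.castRingHom (ZMod 3)) +
      (X ^ 2 - 1) *
        (derivative ((qq (n + 2)).map (Int.castRingHom (ZMod 3))) -
          derivative ((qq (n + 4)).map (Int.castRingHom (ZMod 3)))) = 0 := by
  obtain ⟨j, rfl⟩ : ∃ j : ℕ, n = -(6 * (j : ℤ) + 9) := by
    obtain ⟨k, hk⟩ := hodd
    obtain ⟨t, ht⟩ := h3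
    exact ⟨(-(n + 9) / 6).toNat, by omega⟩
  have hidx₂ : ((-1 - (-(6 * (j : ℤ) + 9) + 2)) / 2).toNat = 3 * j + 2 + 1 := by omega
  have hidx₄ : ((-1 - (-(6 * (j : ℤ) + 9) + 4)) / 2).toNat = 3 * j + 2 := by omega
  have key := qDiffMod3_three_mul_add_two_add_mul_derivative j
  rw [qDiffMod3, Polynomial.map_sub, derivative_sub] at key
  rwa [qq, qq, hidx₂, hidx₄]
end

section
/- For every odd negative integer n, p_n(1) ≡ -1 (mod 3) and p_n(-1) ≡ (-1)^{-(n+1)/2} (mod 3). -/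
/-!
At `x = -1` the recurrence reads `p_{k+2} = -(2 p_{k+1} + p_k)`, which `(-1)^k` solves exactly,
so the second congruence is even an equality. At `x = 1` it reads
`p_{k+2} = -(4 p_{k+1} + p_k) ≡ -(p_{k+1} + p_k) (mod 3)`, which keeps the constant value `-1`.
-/

open Polynomial

theorem pAux_eval_add_two (x : ℤ) (k : ℕ) :
    (pAux (k + 2)).eval x =
      -((x ^ 2 + x + 2) * (pAux (k + 1)).eval x + x ^ 2 * (pAux k).eval x) := by
  simp [pAux]

theorem pAux_eval_one_zmod_three (k : ℕ) : (((pAux k).eval 1 : ℤ) : ZMod 3) = -1 := by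
  induction k using Nat.twoStepInduction with
  | zero => simp [pAux]; decide
  | one => simp [pAux]; decide
  | more k ih ih' =>
    rw [pAux_eval_add_two]
    push_cast
    rw [ih, ih']
    decide

theorem pAux_eval_neg_one (k : ℕ) : (pAux k).eval (-1) = (-1) ^ k := by
  induction k using Nat.twoStepInduction with
  | zero => simp [pAux]
  | one => simp [pAux]
  | more k ih ih' =>
    rw [pAux_eval_add_two, ih, ih']
    ring

theorem p_eval_pm_one_mod_three_general (n : ℤ) (hneg : n < 0) :
    (pp n).eval 1 ≡ -1 [ZMOD 3] ∧
    (pp n).eval (-1) ≡ (-1) ^ ((-(n + 1)) / 2).toNat [ZMOD 3] := by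
  rw [pp, if_pos hneg, show -(n + 1) = -1 - n by ring, pAux_eval_neg_one]
  refine ⟨(ZMod.intCast_eq_intCast_iff _ _ 3).mp ?_, Int.ModEq.refl _⟩
  push_cast
  exact pAux_eval_one_zmod_three _

/-- For every odd negative integer `n`, `p_n(1) ≡ -1 (mod 3)` and
`p_n(-1) ≡ (-1)^(-(n+1)/2) (mod 3)`. -/
theorem p_eval_pm_one_mod_three (n : ℤ) (hodd : Odd n) (hneg : n < 0) :
    (pp n).eval 1 ≡ -1 [ZMOD 3] ∧
    (pp n).eval (-1) ≡ (-1) ^ ((-(n + 1)) / 2).toNat [ZMOD 3] :=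
  p_eval_pm_one_mod_three_general n hneg
end

section
/- For every odd negative integer n, with k = (1-n)/2, the following identity holds in 𝔽₃[v][b]/(b^2 - (v^2-1)(v^2-v-1)): v·b·p_n ≡ (a+b)^k - (a-b)^k - (a+b)^{k+2} + (a-b)^{k+2}, where a = v^2 + v - 1. -/
open Polynomial

/-! In characteristic `3`, the roots `α, β = a ± b` satisfy `α + β = -(v² + v + 2)` and `α β = v²`,
so `k ↦ α ^ k - β ^ k - α ^ (k + 2) + β ^ (k + 2)` obeys the same two-term recurrence as the `p_n`;
the identity then only has to be checked for `n = -1, -3`. -/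

section ClosedForm

variable {R : Type*} [CommRing R]

def closedForm (α β : R) (k : ℕ) : R :=
  α ^ k - β ^ k - α ^ (k + 2) + β ^ (k + 2)

lemma closedForm_add_two (α β : R) (k : ℕ) :
    closedForm α β (k + 2) = (α + β) * closedForm α β (k + 1) - α * β * closedForm α β k := by
  unfold closedForm
  ring

end ClosedForm

lemma aeval_pAux_add_two {A : Type*} [CommRing A] (x : A) (k : ℕ) :
    aeval x (pAux (k + 2)) =
      -((x ^ 2 + x + 2) * aeval x (pAux (k + 1)) + x ^ 2 * aeval x (pAux k)) := by
  simp [pAux, map_ofNat]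

theorem mul_aeval_pAux_eq_closedForm {A : Type*} [CommRing A] (h3 : (3 : A) = 0) {v b : A}
    (hb : b ^ 2 = (v ^ 2 - 1) * (v ^ 2 - v - 1)) (k : ℕ) :
    v * b * aeval v (pAux k) =
      closedForm (v ^ 2 + v - 1 + b) (v ^ 2 + v - 1 - b) (k + 1) := by
  have hsum : (v ^ 2 + v - 1 + b) + (v ^ 2 + v - 1 - b) = -(v ^ 2 + v + 2) := by
    linear_combination (v ^ 2 + v) * h3
  have hprod : (v ^ 2 + v - 1 + b) * (v ^ 2 + v - 1 - b) = v ^ 2 := by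
    linear_combination (v ^ 3 - v) * h3 - hb
  induction k using Nat.twoStepInduction with
  | zero =>
    simp only [pAux, closedForm, map_add, map_mul, map_pow, aeval_X, map_ofNat, map_one]
    linear_combination (2 * b) * hb + (b * (3 * v ^ 4 + 4 * v ^ 3 - 3 * v ^ 2 - 3 * v + 2)) * h3
  | one =>
    simp only [pAux, closedForm, map_neg, map_add, map_mul, map_pow, aeval_X, map_ofNat]
    linear_combination (8 * (v ^ 2 + v - 1) * b) * hb +
      (b * (5 * v ^ 6 + 7 * v ^ 5 - 12 * v ^ 4 - 15 * v ^ 3 + 8 * v ^ 2 + 6 * v - 4)) * h3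
  | more k ih₀ ih₁ =>
    rw [closedForm_add_two, hsum, hprod, ← ih₀, ← ih₁, aeval_pAux_add_two]
    ring

lemma apply_map_intCast_eq_aeval {S A : Type*} [CommRing S] [CommRing A] (φ : S[X] →+* A)
    (p : ℤ[X]) : φ (p.map (Int.castRingHom S)) = aeval (φ X) p := by
  induction p using Polynomial.induction_on <;> simp_all

lemma AdjoinRoot.root_sq_of_eq_X_sq_sub_C {S : Type*} [CommRing S] (c : S) :
    root (X ^ 2 - C c) ^ 2 = of _ c := by
  have h := eval₂_root (X ^ 2 - C c)
  simp only [eval₂_sub, eval₂_X_pow, eval₂_C] at h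
  linear_combination h

theorem p_closed_form_mod_three_general (n : ℤ) (hneg : n < 0) :
    ∀ f : Polynomial (Polynomial (ZMod 3)),
      f = X ^ 2 - C ((X ^ 2 - 1) * (X ^ 2 - X - 1)) →
      ∀ k : ℕ, k = ((1 - n) / 2).toNat →
      (AdjoinRoot.of f X) * (AdjoinRoot.root f) *
          (AdjoinRoot.of f ((pp n).map (Int.castRingHom (ZMod 3)))) =
        (AdjoinRoot.of f (X ^ 2 + X - 1) + AdjoinRoot.root f) ^ k -
          (AdjoinRoot.of f (X ^ 2 + X - 1) - AdjoinRoot.root f) ^ k -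
          (AdjoinRoot.of f (X ^ 2 + X - 1) + AdjoinRoot.root f) ^ (k + 2) +
          (AdjoinRoot.of f (X ^ 2 + X - 1) - AdjoinRoot.root f) ^ (k + 2) := by
  intro f hf k hk
  have h3 : (3 : AdjoinRoot f) = 0 :=
    (map_ofNat (algebraMap (ZMod 3) (AdjoinRoot f)) 3).symm.trans (map_zero _)
  subst hf
  set m := ((-1 - n) / 2).toNat
  have hkm : k = m + 1 := by omega
  have hpp : pp n = pAux m := if_pos hneg
  have hb := AdjoinRoot.root_sq_of_eq_X_sq_sub_C ((X ^ 2 - 1) * (X ^ 2 - X - 1) : (ZMod 3)[X])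
  simp only [map_mul, map_sub, map_pow, map_one] at hb
  simp only [hkm, hpp, apply_map_intCast_eq_aeval, map_add, map_sub, map_pow, map_one]
  exact mul_aeval_pAux_eq_closedForm h3 hb m

/-- For every odd negative integer `n`, with `k = (1-n)/2`, in the ring
`𝔽₃[v][b]/(b^2 - (v^2-1)(v^2-v-1))` one has, with `a = v^2 + v - 1`:
`v·b·p_n = (a+b)^k - (a-b)^k - (a+b)^(k+2) + (a-b)^(k+2)`. -/
theorem p_closed_form_mod_three (n : ℤ) (hodd : Odd n) (hneg : n < 0) :
    ∀ f : Polynomial (Polynomial (ZMod 3)),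
      f = X ^ 2 - C ((X ^ 2 - 1) * (X ^ 2 - X - 1)) →
      ∀ k : ℕ, k = ((1 - n) / 2).toNat →
      (AdjoinRoot.of f X) * (AdjoinRoot.root f) *
          (AdjoinRoot.of f ((pp n).map (Int.castRingHom (ZMod 3)))) =
        (AdjoinRoot.of f (X ^ 2 + X - 1) + AdjoinRoot.root f) ^ k -
          (AdjoinRoot.of f (X ^ 2 + X - 1) - AdjoinRoot.root f) ^ k -
          (AdjoinRoot.of f (X ^ 2 + X - 1) + AdjoinRoot.root f) ^ (k + 2) +
          (AdjoinRoot.of f (X ^ 2 + X - 1) - AdjoinRoot.root f) ^ (k + 2) :=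
  p_closed_form_mod_three_general n hneg
end
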